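/- For all integers n ≥ 1, k ≥ 1 and q ≥ 1, the solution count R_{q,n}^{(k)} satisfies 2^{(k+1)n}·R_{q,n}^{(k)} = Σ_{i=0}^{min(2n,k)} Γ_i(n,k)·2^{q(2n+k−i)}. -/

import Mathlib

open Finset

/-- The `2n × k` n-times persymmetric matrix over `F_2` associated to a parameter tuple
`alpha ∈ (F_2^{k+1})^n` : for `1 ≤ j ≤ n`, rows `2j-1` and `2j` are
`(alpha^(j)_1, ..., alpha^(j)_k)` and `(alpha^(j)_2, ..., alpha^(j)_{k+1})`. -/
def persymMatrix (n k : ℕ) (α : Fin n → Fin (k + 1) → ZMod 2) :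
    Matrix (Fin (2 * n)) (Fin k) (ZMod 2) :=
  Matrix.of fun r c =>
    α ⟨r.val / 2, by have := r.isLt; omega⟩ ⟨r.val % 2 + c.val, by have := c.isLt; omega⟩

/-- `Gamma n k i` is the number of parameter tuples `alpha ∈ (F_2^{k+1})^n` whose associated
n-times persymmetric `2n × k` matrix over `F_2` has rank `i`. -/
noncomputable def Gamma (n k i : ℕ) : ℕ :=
  Nat.card {α : Fin n → Fin (k + 1) → ZMod 2 // (persymMatrix n k α).rank = i}

/-- `Rcount q n k` is the number of tuples `(Y_1, ..., Y_q, (U_j^(i)))` of polynomials over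
`F_2` with `deg Y_i ≤ k-1`, `deg U_j^(i) ≤ 1`, and `∑ i, Y_i * U_j^(i) = 0` for every `j`. -/
noncomputable def Rcount (q n k : ℕ) : ℕ :=
  Nat.card {YU : (Fin q → Polynomial (ZMod 2)) × (Fin n → Fin q → Polynomial (ZMod 2)) //
    (∀ i, (YU.1 i).degree ≤ (k - 1 : ℕ)) ∧
    (∀ j i, (YU.2 j i).degree ≤ 1) ∧
    (∀ j, ∑ i, YU.1 i * YU.2 j i = 0)}

/-!
Both sides are `2^(2qn)` times the number of pairs `(α, Y)` with `M_α Y_i = 0` for all `i`, where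
`M_α` is the persymmetric matrix and the `Y_i` are coefficient vectors of length `k`. Grouping by
`α` gives the right side, as `|ker M_α| = 2^(k - rank M_α)`. For the grouping by `Y`, let `B_Y` be
the matrix of `(U_i) ↦ ∑ i, Y_i U_i` with `deg U_i ≤ 1`, so that `R = ∑_Y |ker B_Y|^n`. The rows
of `M_α` pair `α^(j)` with `Y_i` and `X Y_i`, so `M_α Y_i = 0` for all `i` says that every `α^(j)`
lies in `ker B_Yᵀ`; rank–nullity for `B_Y` and `B_Yᵀ` gives `2^(k+1) |ker B_Y| = 2^(2q) |ker B_Yᵀ|`.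
-/

open Polynomial Matrix

theorem natCard_prod_forall_pi {α β ι : Type*} [Fintype α] [Finite β] [Fintype ι]
    (P : α → β → Prop) :
    Nat.card {p : α × (ι → β) // ∀ j, P p.1 (p.2 j)}
      = ∑ a, Nat.card {b // P a b} ^ Fintype.card ι := by
  rw [Nat.card_congr (Equiv.subtypeProdEquivSigmaSubtype fun a (u : ι → β) => ∀ j, P a (u j)),
    Nat.card_sigma]
  refine Finset.sum_congr rfl fun a _ => ?_
  rw [Nat.card_congr Equiv.subtypePiEquivPi, Nat.card_fun, Nat.card_eq_fintype_card (α := ι)]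

theorem sum_natCard_fiber_mul {α : Type*} [Fintype α] (g : α → ℕ) (f : ℕ → ℕ) {N : ℕ}
    (hg : ∀ a, g a ≤ N) :
    ∑ i ∈ range (N + 1), Nat.card {a // g a = i} * f i = ∑ a, f (g a) := by
  classical
  rw [← Finset.sum_fiberwise_of_maps_to (g := g) (t := range (N + 1))
    fun a _ => mem_range.mpr (Nat.lt_succ_of_le (hg a))]
  refine Finset.sum_congr rfl fun i _ => ?_
  rw [Finset.sum_congr rfl fun a ha => by rw [(mem_filter.mp ha).2], sum_const, smul_eq_mul,
    Nat.card_eq_fintype_card, Fintype.card_subtype]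

section FiniteField

variable {K m n : Type*} [Field K] [Fintype K] [Fintype n]

theorem natCard_mulVec_eq_zero (A : Matrix m n K) :
    Nat.card {v // A *ᵥ v = 0} = Fintype.card K ^ (Fintype.card n - A.rank) := by
  classical
  have hker := A.mulVecLin.finrank_range_add_finrank_ker
  rw [Module.finrank_fintype_fun_eq_card] at hker
  change Nat.card (LinearMap.ker A.mulVecLin) = _
  rw [Module.natCard_eq_pow_finrank (K := K), Nat.card_eq_fintype_card (α := K)]
  congr 1
  exact Nat.eq_sub_of_add_eq' hker

theorem natCard_mulVec_eq_zero_mul_pow [Fintype m] (A : Matrix m n K) :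
    Nat.card {v // A *ᵥ v = 0} * Fintype.card K ^ Fintype.card m
      = Nat.card {w // w ᵥ* A = 0} * Fintype.card K ^ Fintype.card n := by
  simp_rw [← mulVec_transpose, natCard_mulVec_eq_zero, rank_transpose, ← pow_add]
  have := A.rank_le_card_height
  have := A.rank_le_card_width
  congr 1
  omega

end FiniteField

section DegreeBounds

variable {R : Type*} [Semiring R] [DecidableEq R] {n : ℕ}

theorem degree_ofFn_le (hn : 1 ≤ n) (v : Fin n → R) : (ofFn n v).degree ≤ (n - 1 : ℕ) :=
  degree_le_of_natDegree_le (by have := ofFn_natDegree_lt hn v; omega)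

theorem ofFn_toFn_of_degree_le (hn : 1 ≤ n) {p : R[X]} (hp : p.degree ≤ (n - 1 : ℕ)) :
    ofFn n (toFn n p) = p :=
  ofFn_comp_toFn_eq_id_of_natDegree_lt (by have := natDegree_le_of_degree_le hp; omega)

end DegreeBounds

section PolynomialProducts

variable {R : Type*} [CommSemiring R] [DecidableEq R] {q k : ℕ}

/-- The coefficient pairing of `a` with `X ^ s * y`. -/
def shiftDot (a : Fin (k + 1) → R) (s : Fin 2) (y : Fin k → R) : R :=
  ∑ c : Fin k, a ⟨s + c, by omega⟩ * y c

/-- The matrix of `w ↦ ∑ i, y i * w i` on coefficient vectors, each `w i` of degree `≤ 1`. -/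
noncomputable def mulMatrix (y : Fin q → Fin k → R) : Matrix (Fin (k + 1)) (Fin q × Fin 2) R :=
  of fun m is => (ofFn k (y is.1) * X ^ (is.2 : ℕ)).coeff m

theorem coeff_ofFn_mul_X_pow (v : Fin k → R) (s m : ℕ) :
    (ofFn k v * X ^ s).coeff m = ∑ c : Fin k, if s + c = m then v c else 0 := by
  simp only [ofFn_eq_sum_monomial, Finset.sum_mul, monomial_mul_X_pow, finsetSum_coeff,
    coeff_monomial, add_comm s]

theorem vecMul_mulMatrix_apply (a : Fin (k + 1) → R) (y : Fin q → Fin k → R) (i : Fin q)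
    (s : Fin 2) : (a ᵥ* mulMatrix y) (i, s) = shiftDot a s (y i) := by
  simp only [vecMul, dotProduct, mulMatrix, of_apply, coeff_ofFn_mul_X_pow, Finset.mul_sum,
    mul_ite, mul_zero, shiftDot]
  rw [Finset.sum_comm]
  refine Finset.sum_congr rfl fun c _ => ?_
  have hm : ∀ m : Fin (k + 1), (s + c : ℕ) = m ↔ ⟨s + c, by omega⟩ = m := fun m => by
    rw [Fin.ext_iff]
  simp_rw [hm, Finset.sum_ite_eq, Finset.mem_univ, if_true]

theorem sum_ofFn_mul_ofFn_eq_zero_iff (y : Fin q → Fin k → R) (w : Fin q × Fin 2 → R) :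
    ∑ i, ofFn k (y i) * ofFn 2 (fun s => w (i, s)) = 0 ↔ mulMatrix y *ᵥ w = 0 := by
  have hcoeff : ∀ m : ℕ, (∑ i, ofFn k (y i) * ofFn 2 (fun s => w (i, s))).coeff m
      = ∑ is : Fin q × Fin 2, (ofFn k (y is.1) * X ^ (is.2 : ℕ)).coeff m * w is := by
    intro m
    simp only [ofFn_eq_sum_monomial (n := 2), ← C_mul_X_pow_eq_monomial, Finset.mul_sum,
      finsetSum_coeff, Fintype.sum_prod_type, mul_left_comm _ (C _), coeff_C_mul, mul_comm (w _)]
  have hmulVec : ∀ m : Fin (k + 1), (mulMatrix y *ᵥ w) m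
      = (∑ i, ofFn k (y i) * ofFn 2 (fun s => w (i, s))).coeff m := fun m => by
    rw [hcoeff]; rfl
  constructor
  · intro h
    funext m
    rw [hmulVec, h, coeff_zero, Pi.zero_apply]
  · intro h
    ext m
    rw [coeff_zero]
    by_cases hm : m < k + 1
    · rw [← hmulVec ⟨m, hm⟩, h, Pi.zero_apply]
    · rw [hcoeff]
      refine Finset.sum_eq_zero fun is _ => ?_
      rw [coeff_ofFn_mul_X_pow, Finset.sum_eq_zero fun c _ => if_neg (by omega), zero_mul]

end PolynomialProducts

section Persymmetric

variable {n k q : ℕ}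

theorem persymMatrix_mulVec_eq_zero_iff (α : Fin n → Fin (k + 1) → ZMod 2)
    (y : Fin k → ZMod 2) :
    persymMatrix n k α *ᵥ y = 0 ↔ ∀ j s, shiftDot (α j) s y = 0 := by
  refine funext_iff.trans ⟨fun h j s => ?_, fun h r => h ⟨r / 2, by omega⟩ ⟨r % 2, by omega⟩⟩
  obtain ⟨r, rfl, rfl⟩ : ∃ r : Fin (2 * n),
      (⟨r / 2, by omega⟩ : Fin n) = j ∧ (⟨r % 2, by omega⟩ : Fin 2) = s :=
    ⟨⟨2 * j + s, by omega⟩, Fin.ext (by simp; omega), Fin.ext (by simp; omega)⟩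
  exact h r

theorem forall_persymMatrix_mulVec_eq_zero_iff (α : Fin n → Fin (k + 1) → ZMod 2)
    (y : Fin q → Fin k → ZMod 2) :
    (∀ i, persymMatrix n k α *ᵥ y i = 0) ↔ ∀ j, α j ᵥ* mulMatrix y = 0 := by
  simp only [persymMatrix_mulVec_eq_zero_iff]
  simp only [funext_iff, Prod.forall, vecMul_mulMatrix_apply, Pi.zero_apply]
  exact forall_comm

theorem rcount_eq_natCard_mulVec (hk : 1 ≤ k) :
    Rcount q n k = Nat.card {p : (Fin q → Fin k → ZMod 2) × (Fin n → Fin q × Fin 2 → ZMod 2) //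
      ∀ j, mulMatrix p.1 *ᵥ p.2 j = 0} := by
  unfold Rcount
  refine Nat.card_congr
    { toFun := fun p => ⟨(fun i => toFn k (p.1.1 i), fun j is => toFn 2 (p.1.2 j is.1) is.2),
        fun j => (sum_ofFn_mul_ofFn_eq_zero_iff _ _).mp ?_⟩
      invFun := fun p => ⟨(fun i => ofFn k (p.1.1 i), fun j i => ofFn 2 fun s => p.1.2 j (i, s)),
        fun i => degree_ofFn_le hk _,
        fun j i => (degree_ofFn_le one_le_two _).trans_eq (by norm_num),
        fun j => (sum_ofFn_mul_ofFn_eq_zero_iff _ _).mpr (p.2 j)⟩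
      left_inv := ?_
      right_inv := ?_ }
  · obtain ⟨hY, hU, hsum⟩ := p.2
    simpa only [ofFn_toFn_of_degree_le hk (hY _),
      ofFn_toFn_of_degree_le one_le_two ((hU _ _).trans_eq (by norm_num))] using hsum j
  · rintro ⟨⟨Y, U⟩, hY, hU, -⟩
    ext1
    exact Prod.ext (funext fun i => ofFn_toFn_of_degree_le hk (hY i))
      (funext₂ fun j i => ofFn_toFn_of_degree_le one_le_two ((hU j i).trans_eq (by norm_num)))
  · rintro ⟨⟨y, u⟩, -⟩
    ext1
    exact Prod.ext (funext fun i => toFn_comp_ofFn_eq_id k (y i))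
      (funext₂ fun j is => congrFun (toFn_comp_ofFn_eq_id 2 fun s => u j (is.1, s)) is.2)

end Persymmetric

theorem two_pow_mul_rcount_eq_natCard_persymMatrix_ker {n k q : ℕ} (hk : 1 ≤ k) :
    2 ^ ((k + 1) * n) * Rcount q n k
      = 2 ^ (q * 2 * n) * Nat.card {p : (Fin n → Fin (k + 1) → ZMod 2) × (Fin q → Fin k → ZMod 2) //
          ∀ i, persymMatrix n k p.1 *ᵥ p.2 i = 0} := by
  rw [rcount_eq_natCard_mulVec hk, ← Nat.card_congr ((Equiv.prodComm _ _).subtypeEquiv fun p =>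
      (forall_persymMatrix_mulVec_eq_zero_iff p.2 p.1).symm),
    natCard_prod_forall_pi fun y w => mulMatrix y *ᵥ w = 0,
    natCard_prod_forall_pi fun y a => a ᵥ* mulMatrix y = 0, Fintype.card_fin, Finset.mul_sum,
    Finset.mul_sum]
  refine Finset.sum_congr rfl fun y _ => ?_
  have h := natCard_mulVec_eq_zero_mul_pow (mulMatrix y)
  rw [ZMod.card, Fintype.card_prod, Fintype.card_fin, Fintype.card_fin, Fintype.card_fin] at h
  rw [pow_mul, ← mul_pow, mul_comm, h]
  ring

theorem two_pow_mul_natCard_persymMatrix_ker_eq_sum {n k q : ℕ} :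
    2 ^ (q * 2 * n) * Nat.card {p : (Fin n → Fin (k + 1) → ZMod 2) × (Fin q → Fin k → ZMod 2) //
        ∀ i, persymMatrix n k p.1 *ᵥ p.2 i = 0}
      = ∑ α, 2 ^ (q * (2 * n + k - (persymMatrix n k α).rank)) := by
  rw [natCard_prod_forall_pi fun α y => persymMatrix n k α *ᵥ y = 0, Finset.mul_sum]
  refine Finset.sum_congr rfl fun α _ => ?_
  have := (persymMatrix n k α).rank_le_width
  rw [natCard_mulVec_eq_zero, ZMod.card, Fintype.card_fin, Fintype.card_fin,
    show 2 * n + k - (persymMatrix n k α).rank = 2 * n + (k - (persymMatrix n k α).rank) by omega]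
  ring

theorem rcount_eq_gamma_sum_general (n k q : ℕ) (hk : 1 ≤ k) :
    2 ^ ((k + 1) * n) * Rcount q n k
      = ∑ i ∈ Finset.range (min (2 * n) k + 1),
          Gamma n k i * 2 ^ (q * (2 * n + k - i)) := by
  have hrank (α : Fin n → Fin (k + 1) → ZMod 2) : (persymMatrix n k α).rank ≤ min (2 * n) k :=
    le_min (persymMatrix n k α).rank_le_height (persymMatrix n k α).rank_le_width
  rw [two_pow_mul_rcount_eq_natCard_persymMatrix_ker hk,
    two_pow_mul_natCard_persymMatrix_ker_eq_sum]
  exact (sum_natCard_fiber_mul (fun α => (persymMatrix n k α).rank)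
    (fun i => 2 ^ (q * (2 * n + k - i))) hrank).symm

theorem rcount_eq_gamma_sum (n k q : ℕ) (hn : 1 ≤ n) (hk : 1 ≤ k) (hq : 1 ≤ q) :
    2 ^ ((k + 1) * n) * Rcount q n k
      = ∑ i ∈ Finset.range (min (2 * n) k + 1),
          Gamma n k i * 2 ^ (q * (2 * n + k - i)) :=
  rcount_eq_gamma_sum_general n k q hk
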